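/- Assume the MFS setup with eigenvalue bounds (H_s) and boundary-data decay |v̂(m)| ≤ C_v·ρ^{−|m|} for all m ∈ ℤ, and suppose 1 < R < ρ. Then there exist constants B, C > 0, independent of N, such that for every even integer N ≥ 2 there is a coefficient vector α̂ ∈ ℂ^N whose MFS coefficient norm satisfies √N·|α̂| ≤ B (bounded uniformly in N) and whose boundary error satisfies t(α̂) ≤ C·r_N, where r_N = ρ^{−N/2} if ρ < R², r_N = √N·R^{−N} if ρ = R², and r_N = R^{−N} if ρ > R². -/

import Mathlib

open scoped BigOperators ENNReal NNReal

noncomputable section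

/-- The unique representative of `m` modulo `N` lying in the window `(-N/2, N/2]`. -/
def winRep (N : ℕ) (m : ℤ) : ℤ := (m + (N : ℤ) / 2 - 1) % (N : ℤ) - ((N : ℤ) / 2 - 1)

/-- The index window `(-N/2, N/2]` as a finite set of integers. -/
def window (N : ℕ) : Finset ℤ := Finset.Icc (-(N : ℤ) / 2 + 1) ((N : ℤ) / 2)

/-- The norm `|α̂|` of a coefficient vector indexed by the window. -/
def coefNorm (N : ℕ) (a : ℤ → ℂ) : ℝ := Real.sqrt (∑ k ∈ window N, ‖a k‖ ^ 2)

/-- The boundary error norm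
`t(α̂) = (2π·∑_{m∈ℤ} |(N/(2π))·ŝ(m)·α̂_{⟨m⟩_N} − v̂(m)|²)^{1/2}`, valued in `[0,∞]`. -/
def tErr (N : ℕ) (s v a : ℤ → ℂ) : ℝ≥0∞ :=
  (ENNReal.ofReal (2 * Real.pi) *
    ∑' m : ℤ, (‖((N : ℂ) / (2 * (Real.pi : ℂ))) * s m * a (winRep N m) - v m‖₊ : ℝ≥0∞) ^ 2)
    ^ (1 / 2 : ℝ)

/-!
Take the collocation coefficients `α̂_k = (2π/N)·v̂(k)/ŝ(k)` on the window `(-N/2, N/2]`. They make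
the residual vanish for `m` in the window, and `|v̂(k)/ŝ(k)| ≲ (|k|+1)(R/ρ)^|k|` is bounded, so
`√N·|α̂|` is bounded. For `m = k + jN` outside the window (`k = ⟨m⟩_N`, `j ≠ 0`) the residual is
`ŝ(m)v̂(k)/ŝ(k) − v̂(m)`, and since `|m| ≥ N|j| − |k|` both terms are `≲ (R²/ρ)^|k|·R^(−N|j|)`.
The squared error is therefore bounded by `∑_{j≠0} R^(−2N|j|) ≲ R^(−2N)` times the window sum
`∑_k (R²/ρ)^(2|k|)`, which is `≲ (R²/ρ)^N`, `= N` or `≲ 1` according as `ρ < R²`, `ρ = R²`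
or `ρ > R²`.
-/

open Finset

theorem geom_sum_le_inv_one_sub {x : ℝ} (hx0 : 0 ≤ x) (hx1 : x < 1) (n : ℕ) :
    ∑ i ∈ range n, x ^ i ≤ (1 - x)⁻¹ := by
  simpa only [range_eq_Ico, pow_zero, one_div] using
    geom_sum_Ico_le_of_lt_one (m := 0) (n := n) hx0 hx1

theorem ENNReal.tsum_ite_eq_zero_pow_natAbs (r : ℝ≥0∞) :
    ∑' j : ℤ, (if j = 0 then 0 else r ^ j.natAbs) = 2 * (r * (1 - r)⁻¹) := by
  have hsucc : ∑' n : ℕ, r ^ (n + 1) = r * (1 - r)⁻¹ := by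
    simp_rw [pow_succ', ENNReal.tsum_mul_left, ENNReal.tsum_geometric]
  rw [tsum_of_nat_of_neg_add_one ENNReal.summable ENNReal.summable,
    tsum_eq_zero_add' ENNReal.summable]
  have hneg (n : ℕ) : (if -((n : ℤ) + 1) = 0 then 0 else r ^ (-((n : ℤ) + 1)).natAbs) =
      r ^ (n + 1) := by
    rw [if_neg (by omega), show (-((n : ℤ) + 1)).natAbs = n + 1 by omega]
  simp only [Nat.cast_eq_zero, if_true, zero_add, Nat.succ_ne_zero, if_false, Int.natAbs_natCast,
    hneg, hsucc, two_mul]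

theorem ENNReal.tsum_ite_eq_zero_ofReal_pow_natAbs_le {x y : ℝ} (hx : 0 ≤ x) (hxy : x ≤ y)
    (hy : y < 1) :
    ∑' j : ℤ, (if j = 0 then 0 else ENNReal.ofReal x ^ j.natAbs) ≤
      ENNReal.ofReal (2 * (x * (1 - y)⁻¹)) := by
  rw [ENNReal.tsum_ite_eq_zero_pow_natAbs, ENNReal.ofReal_mul zero_le_two, ENNReal.ofReal_ofNat,
    ENNReal.ofReal_mul hx, ENNReal.ofReal_inv_of_pos (by linarith),
    ENNReal.ofReal_sub _ (hx.trans hxy), ENNReal.ofReal_one]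
  gcongr

theorem succ_mul_pow_le_inv_one_sub {x : ℝ} (hx0 : 0 ≤ x) (hx1 : x < 1) (n : ℕ) :
    (n + 1) * x ^ n ≤ (1 - x)⁻¹ := by
  calc (n + 1 : ℝ) * x ^ n = ∑ i ∈ range (n + 1), x ^ n := by simp
    _ ≤ ∑ i ∈ range (n + 1), x ^ i :=
        sum_le_sum fun i hi => pow_le_pow_of_le_one hx0 hx1.le (by simp at hi; omega)
    _ ≤ (1 - x)⁻¹ := geom_sum_le_inv_one_sub hx0 hx1 _

section Window

variable {N : ℕ}

theorem mem_window {m : ℤ} : m ∈ window N ↔ -(N : ℤ) / 2 + 1 ≤ m ∧ m ≤ N / 2 :=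
  Finset.mem_Icc

theorem winRep_mem_window (hN : Even N) (hN0 : 0 < N) (m : ℤ) : winRep N m ∈ window N := by
  obtain ⟨h, rfl⟩ := hN
  have := Int.emod_nonneg (m + ((h + h : ℕ) : ℤ) / 2 - 1) (b := (h + h : ℕ)) (by omega)
  have := Int.emod_lt_of_pos (m + ((h + h : ℕ) : ℤ) / 2 - 1) (b := (h + h : ℕ)) (by omega)
  rw [mem_window, winRep]
  omega

theorem winRep_eq_self (hN : Even N) {m : ℤ} (hm : m ∈ window N) : winRep N m = m := by
  obtain ⟨h, rfl⟩ := hN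
  rw [mem_window] at hm
  rw [winRep, Int.emod_eq_of_lt (by omega) (by omega)]
  ring

def foldIndex (N : ℕ) (m : ℤ) : ℤ := (m - winRep N m) / N

theorem winRep_add_mul_foldIndex (N : ℕ) (m : ℤ) : winRep N m + N * foldIndex N m = m := by
  have := Int.mul_ediv_add_emod (m + (N : ℤ) / 2 - 1) N
  rw [foldIndex, Int.mul_ediv_cancel' ⟨(m + (N : ℤ) / 2 - 1) / N, by rw [winRep]; omega⟩]
  ring

theorem foldIndex_ne_zero (hN : Even N) (hN0 : 0 < N) {m : ℤ} (hm : m ∉ window N) :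
    foldIndex N m ≠ 0 := by
  intro h
  have := winRep_add_mul_foldIndex N m
  rw [h, mul_zero, add_zero] at this
  exact hm (this ▸ winRep_mem_window hN hN0 m)

theorem card_window (hN : Even N) : #(window N) = N := by
  obtain ⟨h, rfl⟩ := hN
  rw [window, Int.card_Icc]
  omega

theorem two_mul_natAbs_le_of_mem_window (hN : Even N) {k : ℤ} (hk : k ∈ window N) :
    2 * k.natAbs ≤ N := by
  obtain ⟨h, rfl⟩ := hN
  rw [mem_window] at hk
  omega

theorem sum_window_le_two_mul_sum_range (f : ℕ → ℝ) (hf : ∀ n, 0 ≤ f n) :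
    ∑ k ∈ window N, f k.natAbs ≤ 2 * ∑ n ∈ range (N / 2 + 1), f n := by
  let g : ℕ × Bool → ℤ := fun p => if p.2 then p.1 else -p.1
  have hsub : window N ⊆ (range (N / 2 + 1) ×ˢ univ).image g := by
    intro k hk
    rw [mem_window] at hk
    simp only [mem_image, mem_product, mem_range, mem_univ, and_true, Prod.exists]
    rcases le_or_gt 0 k with h0 | h0
    · exact ⟨k.natAbs, true, by omega, by simp only [g, if_true]; omega⟩
    · exact ⟨k.natAbs, false, by omega, by simp only [g, Bool.false_eq_true, if_false]; omega⟩
  calc ∑ k ∈ window N, f k.natAbs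
      ≤ ∑ k ∈ (range (N / 2 + 1) ×ˢ univ).image g, f k.natAbs :=
        sum_le_sum_of_subset_of_nonneg hsub fun _ _ _ => hf _
    _ ≤ ∑ p ∈ range (N / 2 + 1) ×ˢ univ, f (g p).natAbs :=
        sum_image_le_of_nonneg fun _ _ => hf _
    _ = 2 * ∑ n ∈ range (N / 2 + 1), f n := by
        rw [sum_product, mul_sum]
        refine sum_congr rfl fun n _ => ?_
        simp [g, two_mul]

theorem tsum_le_sum_window_mul_tsum (hN : Even N) (hN0 : 0 < N) {F u w : ℤ → ℝ≥0∞}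
    (h : ∀ m, F m ≤ u (winRep N m) * w (foldIndex N m)) :
    ∑' m, F m ≤ (∑ k ∈ window N, u k) * ∑' j, w j := by
  let φ : ℤ → window N × ℤ := fun m => (⟨winRep N m, winRep_mem_window hN hN0 m⟩, foldIndex N m)
  have hφ : Function.Injective φ := by
    intro m m' hmm'
    simp only [φ, Prod.mk.injEq, Subtype.mk.injEq] at hmm'
    rw [← winRep_add_mul_foldIndex N m, ← winRep_add_mul_foldIndex N m', hmm'.1, hmm'.2]
  calc ∑' m, F m ≤ ∑' m, (fun p : window N × ℤ => u p.1 * w p.2) (φ m) := ENNReal.tsum_le_tsum h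
    _ ≤ ∑' p : window N × ℤ, u p.1 * w p.2 := ENNReal.tsum_comp_le_tsum_of_injective hφ _
    _ = (∑ k ∈ window N, u k) * ∑' j, w j := by
      rw [ENNReal.tsum_prod', ← Finset.tsum_subtype, ← ENNReal.tsum_mul_right]
      simp_rw [ENNReal.tsum_mul_left]

def windowGeomSum (N : ℕ) (q : ℝ) : ℝ := ∑ k ∈ window N, q ^ k.natAbs

theorem windowGeomSum_nonneg {q : ℝ} (hq : 0 ≤ q) : 0 ≤ windowGeomSum N q :=
  sum_nonneg fun _ _ => pow_nonneg hq _

theorem windowGeomSum_one (hN : Even N) : windowGeomSum N 1 = N := by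
  simp [windowGeomSum, card_window hN]

theorem windowGeomSum_le_of_lt_one {q : ℝ} (hq0 : 0 ≤ q) (hq1 : q < 1) :
    windowGeomSum N q ≤ 2 * (1 - q)⁻¹ := by
  refine (sum_window_le_two_mul_sum_range _ fun n => pow_nonneg hq0 n).trans ?_
  gcongr
  exact geom_sum_le_inv_one_sub hq0 hq1 _

theorem windowGeomSum_le_of_one_lt {q : ℝ} (hq : 1 < q) :
    windowGeomSum N q ≤ 2 * q / (q - 1) * q ^ (N / 2) := by
  refine (sum_window_le_two_mul_sum_range _ fun n => by positivity).trans ?_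
  rw [geom_sum_eq hq.ne', pow_succ, div_mul_eq_mul_div, mul_assoc, ← mul_div_assoc]
  gcongr
  linarith

end Window

theorem inv_pow_mul_div_pow_le {N : ℕ} {R ρ : ℝ} (hR : 1 ≤ R) (hρ : 0 < ρ) {a b c : ℕ}
    (h : N * c ≤ a + b) :
    (R ^ b)⁻¹ * (R / ρ) ^ a ≤ (R ^ 2 / ρ) ^ a * ((R ^ N)⁻¹) ^ c := by
  have hsplit : (R ^ 2 / ρ) ^ a * ((R ^ N)⁻¹) ^ c = (R ^ (N * c))⁻¹ * R ^ a * (R / ρ) ^ a := by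
    rw [inv_pow, ← pow_mul, show R ^ 2 / ρ = R * (R / ρ) by ring, mul_pow]
    ring
  rw [hsplit]
  gcongr ?_ * _
  calc (R ^ b)⁻¹ = (R ^ (a + b))⁻¹ * R ^ a := by rw [pow_add]; field_simp
    _ ≤ (R ^ (N * c))⁻¹ * R ^ a := by gcongr

theorem inv_pow_le_div_pow {N : ℕ} {R ρ : ℝ} (hR : 1 ≤ R) (hRρ : R ≤ ρ) {a b c : ℕ}
    (h2a : 2 * a ≤ N * c) (h : N * c ≤ a + b) :
    (ρ ^ b)⁻¹ ≤ (R ^ 2 / ρ) ^ a * ((R ^ N)⁻¹) ^ c := by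
  obtain ⟨e, he⟩ := Nat.exists_eq_add_of_le h2a
  have hsplit : (R ^ 2 / ρ) ^ a * ((R ^ N)⁻¹) ^ c = (ρ ^ a * R ^ e)⁻¹ := by
    rw [inv_pow, ← pow_mul, he, div_pow, ← pow_mul, pow_add]
    field_simp
  have hρ0 : 0 < ρ := by linarith
  refine hsplit ▸ inv_anti₀ (by positivity) ?_
  calc ρ ^ a * R ^ e ≤ ρ ^ a * ρ ^ e := by gcongr
    _ = ρ ^ (a + e) := (pow_add _ _ _).symm
    _ ≤ ρ ^ b := pow_le_pow_right₀ (hR.trans hRρ) (by omega)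

def collocationCoeff (N : ℕ) (s v : ℤ → ℂ) (k : ℤ) : ℂ := 2 * Real.pi / N * (v k / s k)

section Estimates

variable {N : ℕ} {s v : ℤ → ℂ} {R ρ c₀ Cs Cv : ℝ}

theorem min_div_succ_le_norm {cs : ℝ} (hcs : 0 < cs) (hR : 0 < R)
    (hsl : ∀ k ≠ 0, cs / k.natAbs * (R ^ k.natAbs)⁻¹ ≤ ‖s k‖) (k : ℤ) :
    min cs ‖s 0‖ / (k.natAbs + 1) * (R ^ k.natAbs)⁻¹ ≤ ‖s k‖ := by
  rcases eq_or_ne k 0 with rfl | hk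
  · simp
  · have hk0 : (0 : ℝ) < k.natAbs := by positivity
    refine le_trans (mul_le_mul_of_nonneg_right ?_ (by positivity)) (hsl k hk)
    exact div_le_div₀ hcs.le (min_le_left _ _) hk0 (by linarith)

theorem residual_collocationCoeff (hN0 : 0 < N) (m : ℤ) :
    (N : ℂ) / (2 * Real.pi) * s m * collocationCoeff N s v (winRep N m) - v m =
      s m * (v (winRep N m) / s (winRep N m)) - v m := by
  have : (N : ℂ) ≠ 0 := by exact_mod_cast hN0.ne'
  have : (Real.pi : ℂ) ≠ 0 := by exact_mod_cast Real.pi_ne_zero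
  rw [collocationCoeff]
  field_simp

theorem norm_collocationCoeff (k : ℤ) :
    ‖collocationCoeff N s v k‖ = 2 * Real.pi / N * (‖v k‖ / ‖s k‖) := by
  simp [collocationCoeff, abs_of_pos Real.pi_pos]

theorem sqrt_mul_coefNorm_collocationCoeff_le (hN : Even N) (hN0 : 0 < N) {E : ℝ}
    (hE : ∀ k, ‖v k‖ / ‖s k‖ ≤ E) :
    √N * coefNorm N (collocationCoeff N s v) ≤ 2 * Real.pi * E := by
  have hE0 : 0 ≤ E := (div_nonneg (norm_nonneg _) (norm_nonneg _)).trans (hE 0)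
  have hsum : ∑ k ∈ window N, ‖collocationCoeff N s v k‖ ^ 2 ≤ N * (2 * Real.pi / N * E) ^ 2 := by
    calc _ ≤ ∑ k ∈ window N, (2 * Real.pi / N * E) ^ 2 :=
          sum_le_sum fun k _ => by rw [norm_collocationCoeff]; gcongr; exact hE k
      _ = _ := by rw [sum_const, card_window hN, nsmul_eq_mul]
  calc √N * coefNorm N (collocationCoeff N s v) ≤ √N * √(N * (2 * Real.pi / N * E) ^ 2) := by
        rw [coefNorm]; gcongr
    _ = 2 * Real.pi * E := by
        rw [Real.sqrt_mul (Nat.cast_nonneg N), Real.sqrt_sq (by positivity), ← mul_assoc,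
          Real.mul_self_sqrt (Nat.cast_nonneg N)]
        field_simp

theorem norm_div_norm_le_succ_mul_pow (hR : 0 < R) (hρ : 0 < ρ) (hc₀ : 0 < c₀)
    (hs : ∀ k, c₀ / (k.natAbs + 1) * (R ^ k.natAbs)⁻¹ ≤ ‖s k‖)
    (hv : ∀ m, ‖v m‖ ≤ Cv * (ρ ^ m.natAbs)⁻¹) (k : ℤ) :
    ‖v k‖ / ‖s k‖ ≤ Cv / c₀ * ((k.natAbs + 1) * (R / ρ) ^ k.natAbs) := by
  calc ‖v k‖ / ‖s k‖ ≤ Cv * (ρ ^ k.natAbs)⁻¹ / (c₀ / (k.natAbs + 1) * (R ^ k.natAbs)⁻¹) :=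
        div_le_div₀ ((norm_nonneg _).trans (hv k)) (hv k) (by positivity) (hs k)
    _ = Cv / c₀ * ((k.natAbs + 1) * (R / ρ) ^ k.natAbs) := by
        rw [div_pow]
        field_simp

theorem norm_div_norm_le_inv_one_sub (hR : 0 < R) (hRρ : R < ρ) (hc₀ : 0 < c₀) (hCv : 0 ≤ Cv)
    (hs : ∀ k, c₀ / (k.natAbs + 1) * (R ^ k.natAbs)⁻¹ ≤ ‖s k‖)
    (hv : ∀ m, ‖v m‖ ≤ Cv * (ρ ^ m.natAbs)⁻¹) (k : ℤ) :
    ‖v k‖ / ‖s k‖ ≤ Cv / c₀ * (1 - R / ρ)⁻¹ := by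
  have hρ : 0 < ρ := hR.trans hRρ
  refine (norm_div_norm_le_succ_mul_pow hR hρ hc₀ hs hv k).trans ?_
  gcongr
  exact succ_mul_pow_le_inv_one_sub (by positivity) ((div_lt_one hρ).2 hRρ) _

theorem norm_alias_residual_le (hN0 : 0 < N) (hR : 1 ≤ R) (hRρ : R ≤ ρ) (hc₀ : 0 < c₀)
    (hCs : 0 ≤ Cs) (hCv : 0 ≤ Cv)
    (hs : ∀ k, c₀ / (k.natAbs + 1) * (R ^ k.natAbs)⁻¹ ≤ ‖s k‖)
    (hsu : ∀ m ≠ 0, ‖s m‖ ≤ Cs / m.natAbs * (R ^ m.natAbs)⁻¹)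
    (hv : ∀ m, ‖v m‖ ≤ Cv * (ρ ^ m.natAbs)⁻¹) {k j : ℤ} (hk : 2 * k.natAbs ≤ N) (hj : j ≠ 0) :
    ‖s (k + N * j) * (v k / s k) - v (k + N * j)‖ ≤
      (2 * (Cs * Cv / c₀) + Cv) * ((R ^ 2 / ρ) ^ k.natAbs * ((R ^ N)⁻¹) ^ j.natAbs) := by
  have hR0 : 0 < R := by linarith
  have hρ0 : 0 < ρ := by linarith
  set m := k + N * j with hm
  have hNj : ((N : ℤ) * j).natAbs = N * j.natAbs := by rw [Int.natAbs_mul, Int.natAbs_natCast]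
  have hNc : N ≤ N * j.natAbs := Nat.le_mul_of_pos_right N (Int.natAbs_pos.2 hj)
  have hP : N * j.natAbs ≤ k.natAbs + m.natAbs := by omega
  have hm0 : m ≠ 0 := by omega
  have hterm1 : ‖s m‖ * (‖v k‖ / ‖s k‖) ≤
      2 * (Cs * Cv / c₀) * ((R ^ 2 / ρ) ^ k.natAbs * ((R ^ N)⁻¹) ^ j.natAbs) := by
    calc ‖s m‖ * (‖v k‖ / ‖s k‖)
        ≤ Cs / m.natAbs * (R ^ m.natAbs)⁻¹ * (Cv / c₀ * ((k.natAbs + 1) * (R / ρ) ^ k.natAbs)) :=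
          mul_le_mul (hsu m hm0) (norm_div_norm_le_succ_mul_pow hR0 hρ0 hc₀ hs hv k) (by positivity)
            (by positivity)
      _ = Cs * Cv / c₀ * ((k.natAbs + 1) / m.natAbs) * ((R ^ m.natAbs)⁻¹ * (R / ρ) ^ k.natAbs) := by
          ring
      _ ≤ Cs * Cv / c₀ * 2 * ((R ^ 2 / ρ) ^ k.natAbs * ((R ^ N)⁻¹) ^ j.natAbs) := by
          gcongr _ * ?_ * ?_
          · rw [div_le_iff₀ (by positivity)]
            exact_mod_cast (by omega : k.natAbs + 1 ≤ 2 * m.natAbs)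
          · exact inv_pow_mul_div_pow_le hR hρ0 hP
      _ = _ := by ring
  have hterm2 : ‖v m‖ ≤ Cv * ((R ^ 2 / ρ) ^ k.natAbs * ((R ^ N)⁻¹) ^ j.natAbs) :=
    (hv m).trans (by gcongr; exact inv_pow_le_div_pow hR hRρ (by omega) hP)
  calc ‖s m * (v k / s k) - v m‖ ≤ ‖s m‖ * (‖v k‖ / ‖s k‖) + ‖v m‖ := by
        simpa only [norm_mul, norm_div] using norm_sub_le (s m * (v k / s k)) (v m)
    _ ≤ _ := by linarith

theorem tErr_le_ofReal {a : ℤ → ℂ} {X : ℝ} (hX : 0 ≤ X)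
    (h : ∑' m, (‖(N : ℂ) / (2 * Real.pi) * s m * a (winRep N m) - v m‖₊ : ℝ≥0∞) ^ 2 ≤
      ENNReal.ofReal (X ^ 2)) :
    tErr N s v a ≤ ENNReal.ofReal (√(2 * Real.pi) * X) := by
  rw [tErr]
  calc _ ≤ (ENNReal.ofReal (2 * Real.pi) * ENNReal.ofReal (X ^ 2)) ^ (1 / 2 : ℝ) := by gcongr
    _ = ENNReal.ofReal (√(2 * Real.pi) * X) := by
      rw [← ENNReal.ofReal_mul (by positivity),
        ENNReal.ofReal_rpow_of_nonneg (by positivity) (by norm_num), ← Real.sqrt_eq_rpow,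
        Real.sqrt_mul (by positivity), Real.sqrt_sq hX]

theorem enorm_residual_collocationCoeff_sq_le (hN : Even N) (hN0 : 0 < N) (hR : 1 ≤ R)
    (hRρ : R ≤ ρ) (hc₀ : 0 < c₀) (hCs : 0 ≤ Cs) (hCv : 0 ≤ Cv)
    (hs : ∀ k, c₀ / (k.natAbs + 1) * (R ^ k.natAbs)⁻¹ ≤ ‖s k‖)
    (hsu : ∀ m ≠ 0, ‖s m‖ ≤ Cs / m.natAbs * (R ^ m.natAbs)⁻¹)
    (hv : ∀ m, ‖v m‖ ≤ Cv * (ρ ^ m.natAbs)⁻¹) (m : ℤ) :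
    (‖(N : ℂ) / (2 * Real.pi) * s m * collocationCoeff N s v (winRep N m) - v m‖₊ : ℝ≥0∞) ^ 2 ≤
      ENNReal.ofReal ((2 * (Cs * Cv / c₀) + Cv) * (R ^ 2 / ρ) ^ (winRep N m).natAbs) ^ 2 *
        if foldIndex N m = 0 then 0
        else ENNReal.ofReal (((R ^ N)⁻¹) ^ 2) ^ (foldIndex N m).natAbs := by
  have hρ0 : 0 < ρ := by linarith
  rw [residual_collocationCoeff hN0]
  by_cases hm : m ∈ window N
  · have hsm : s m ≠ 0 := norm_pos_iff.1 (lt_of_lt_of_le (by positivity) (hs m))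
    rw [winRep_eq_self hN hm, mul_div_cancel₀ _ hsm, sub_self]
    simp
  have hj := foldIndex_ne_zero hN hN0 hm
  have hres := norm_alias_residual_le hN0 hR hRρ hc₀ hCs hCv hs hsu hv
    (two_mul_natAbs_le_of_mem_window hN (winRep_mem_window hN hN0 m)) hj
  rw [winRep_add_mul_foldIndex, ← mul_assoc] at hres
  rw [if_neg hj, ← enorm_eq_nnnorm, ← ofReal_norm, ← ENNReal.ofReal_pow (norm_nonneg _),
    ← ENNReal.ofReal_pow (by positivity), ← ENNReal.ofReal_pow (sq_nonneg _),
    ← ENNReal.ofReal_mul (by positivity)]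
  refine ENNReal.ofReal_le_ofReal ((pow_le_pow_left₀ (norm_nonneg _) hres 2).trans_eq ?_)
  ring

theorem tErr_collocationCoeff_le (hN : Even N) (hN0 : 0 < N) (hR : 1 < R) (hRρ : R ≤ ρ)
    (hc₀ : 0 < c₀) (hCs : 0 ≤ Cs) (hCv : 0 ≤ Cv)
    (hs : ∀ k, c₀ / (k.natAbs + 1) * (R ^ k.natAbs)⁻¹ ≤ ‖s k‖)
    (hsu : ∀ m ≠ 0, ‖s m‖ ≤ Cs / m.natAbs * (R ^ m.natAbs)⁻¹)
    (hv : ∀ m, ‖v m‖ ≤ Cv * (ρ ^ m.natAbs)⁻¹) :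
    tErr N s v (collocationCoeff N s v) ≤ ENNReal.ofReal (√(2 * Real.pi) *
      ((2 * (Cs * Cv / c₀) + Cv) * √(2 * (1 - (R ^ 2)⁻¹)⁻¹)) *
        (√(windowGeomSum N ((R ^ 2 / ρ) ^ 2)) * (R ^ N)⁻¹)) := by
  set K := 2 * (Cs * Cv / c₀) + Cv
  set x := (R ^ N)⁻¹
  set S := windowGeomSum N ((R ^ 2 / ρ) ^ 2)
  have hS : 0 ≤ S := windowGeomSum_nonneg (sq_nonneg _)
  have hρ0 : 0 < ρ := by linarith
  have hR2 : (R ^ 2)⁻¹ < 1 := inv_lt_one_of_one_lt₀ (one_lt_pow₀ hR two_ne_zero)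
  have hx : x ^ 2 ≤ (R ^ 2)⁻¹ := by
    rw [inv_pow, ← pow_mul, mul_comm]
    exact inv_anti₀ (by positivity) (pow_le_pow_right₀ hR.le (by omega))
  rw [mul_assoc]
  refine tErr_le_ofReal (by positivity) ?_
  calc _ ≤ (∑ k ∈ window N, ENNReal.ofReal (K * (R ^ 2 / ρ) ^ k.natAbs) ^ 2) *
          ∑' j : ℤ, (if j = 0 then 0 else ENNReal.ofReal (x ^ 2) ^ j.natAbs) :=
        tsum_le_sum_window_mul_tsum hN hN0
          (enorm_residual_collocationCoeff_sq_le hN hN0 hR.le hRρ hc₀ hCs hCv hs hsu hv)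
    _ ≤ ENNReal.ofReal (K ^ 2 * S) * ENNReal.ofReal (2 * (x ^ 2 * (1 - (R ^ 2)⁻¹)⁻¹)) := by
        gcongr
        · rw [show S = ∑ k ∈ window N, ((R ^ 2 / ρ) ^ 2) ^ k.natAbs from rfl, mul_sum,
            ENNReal.ofReal_sum_of_nonneg fun k _ => by positivity]
          refine sum_le_sum fun k _ => le_of_eq ?_
          rw [← ENNReal.ofReal_pow (by positivity), mul_pow, ← pow_mul, ← pow_mul, mul_comm 2]
        · exact ENNReal.tsum_ite_eq_zero_ofReal_pow_natAbs_le (by positivity) hx hR2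
    _ = ENNReal.ofReal ((K * √(2 * (1 - (R ^ 2)⁻¹)⁻¹) * (√S * x)) ^ 2) := by
        rw [← ENNReal.ofReal_mul (by positivity)]
        congr 1
        have : 0 ≤ 2 * (1 - (R ^ 2)⁻¹)⁻¹ := mul_nonneg zero_le_two (inv_nonneg.2 (by linarith))
        rw [mul_pow, mul_pow, mul_pow, Real.sq_sqrt this, Real.sq_sqrt hS]
        ring

theorem exists_coefNorm_tErr_collocationCoeff_le (hR : 1 < R) (hRρ : R < ρ) (hc₀ : 0 < c₀)
    (hCs : 0 ≤ Cs) (hCv : 0 < Cv)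
    (hs : ∀ k, c₀ / (k.natAbs + 1) * (R ^ k.natAbs)⁻¹ ≤ ‖s k‖)
    (hsu : ∀ m ≠ 0, ‖s m‖ ≤ Cs / m.natAbs * (R ^ m.natAbs)⁻¹)
    (hv : ∀ m, ‖v m‖ ≤ Cv * (ρ ^ m.natAbs)⁻¹) :
    ∃ B D, 0 < B ∧ 0 < D ∧ ∀ N : ℕ, Even N → 0 < N →
      √N * coefNorm N (collocationCoeff N s v) ≤ B ∧
      tErr N s v (collocationCoeff N s v) ≤
        ENNReal.ofReal (D * (√(windowGeomSum N ((R ^ 2 / ρ) ^ 2)) * (R ^ N)⁻¹)) := by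
  have hR0 : 0 < R := by linarith
  have hρ : 0 < ρ := by linarith
  have hB : 0 < 1 - R / ρ := sub_pos.2 ((div_lt_one hρ).2 hRρ)
  have hD : 0 < 1 - (R ^ 2)⁻¹ := sub_pos.2 (inv_lt_one_of_one_lt₀ (one_lt_pow₀ hR two_ne_zero))
  exact ⟨_, _, by positivity, by positivity, fun N hN hN0 =>
    ⟨sqrt_mul_coefNorm_collocationCoeff_le hN hN0
        (norm_div_norm_le_inv_one_sub hR0 hRρ hc₀ hCv.le hs hv),
      tErr_collocationCoeff_le hN hN0 hR hRρ.le hc₀ hCs hCv.le hs hsu hv⟩⟩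

end Estimates

section Rates

variable {N : ℕ} {R ρ : ℝ}

theorem sqrt_windowGeomSum_mul_le_of_lt (hR : 0 < R) (hρ : 0 < ρ) (h : ρ < R ^ 2) (hN : Even N) :
    √(windowGeomSum N ((R ^ 2 / ρ) ^ 2)) * (R ^ N)⁻¹ ≤
      √(2 * (R ^ 2 / ρ) ^ 2 / ((R ^ 2 / ρ) ^ 2 - 1)) * ρ ^ (-(N : ℝ) / 2) := by
  obtain ⟨M, rfl⟩ := hN
  have hq : 1 < R ^ 2 / ρ := (one_lt_div hρ).2 h
  have hS := windowGeomSum_le_of_one_lt (N := M + M) (one_lt_pow₀ hq two_ne_zero)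
  rw [show (M + M) / 2 = M by omega, ← pow_mul, mul_comm 2 M, pow_mul] at hS
  have hrate : (R ^ 2 / ρ) ^ M * (R ^ (M + M))⁻¹ = ρ ^ (-((M + M : ℕ) : ℝ) / 2) := by
    rw [show -((M + M : ℕ) : ℝ) / 2 = -(M : ℝ) by push_cast; ring, Real.rpow_neg hρ.le,
      Real.rpow_natCast, ← two_mul, pow_mul, div_pow]
    field_simp
  calc √(windowGeomSum (M + M) ((R ^ 2 / ρ) ^ 2)) * (R ^ (M + M))⁻¹
      ≤ √(2 * (R ^ 2 / ρ) ^ 2 / ((R ^ 2 / ρ) ^ 2 - 1) * ((R ^ 2 / ρ) ^ M) ^ 2) *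
          (R ^ (M + M))⁻¹ := by
        gcongr
    _ = _ := by
        rw [Real.sqrt_mul' _ (sq_nonneg _), Real.sqrt_sq (by positivity), mul_assoc, hrate]

theorem sqrt_windowGeomSum_mul_eq_of_eq (hR : 0 < R) (h : ρ = R ^ 2) (hN : Even N) :
    √(windowGeomSum N ((R ^ 2 / ρ) ^ 2)) * (R ^ N)⁻¹ = √N * R ^ (-(N : ℝ)) := by
  rw [h, div_self (pow_ne_zero 2 hR.ne'), one_pow, windowGeomSum_one hN, Real.rpow_neg hR.le,
    Real.rpow_natCast]

theorem sqrt_windowGeomSum_mul_le_of_gt (hR : 0 < R) (h : R ^ 2 < ρ) :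
    √(windowGeomSum N ((R ^ 2 / ρ) ^ 2)) * (R ^ N)⁻¹ ≤
      √(2 * (1 - (R ^ 2 / ρ) ^ 2)⁻¹) * R ^ (-(N : ℝ)) := by
  have hρ : 0 < ρ := (pow_pos hR 2).trans h
  have hq : R ^ 2 / ρ < 1 := (div_lt_one hρ).2 h
  rw [Real.rpow_neg hR.le, Real.rpow_natCast]
  gcongr
  exact windowGeomSum_le_of_lt_one (by positivity) (pow_lt_one₀ (by positivity) hq two_ne_zero)

theorem exists_sqrt_windowGeomSum_mul_le (hR : 0 < R) (hρ : 0 < ρ) :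
    ∃ C, 0 < C ∧ ∀ N : ℕ, Even N →
      (ρ < R ^ 2 → √(windowGeomSum N ((R ^ 2 / ρ) ^ 2)) * (R ^ N)⁻¹ ≤ C * ρ ^ (-(N : ℝ) / 2)) ∧
      (ρ = R ^ 2 → √(windowGeomSum N ((R ^ 2 / ρ) ^ 2)) * (R ^ N)⁻¹ ≤ C * (√N * R ^ (-(N : ℝ)))) ∧
      (R ^ 2 < ρ → √(windowGeomSum N ((R ^ 2 / ρ) ^ 2)) * (R ^ N)⁻¹ ≤ C * R ^ (-(N : ℝ))) := by
  rcases lt_trichotomy ρ (R ^ 2) with h | h | h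
  · have hq : 1 < (R ^ 2 / ρ) ^ 2 := one_lt_pow₀ ((one_lt_div hρ).2 h) two_ne_zero
    have := sub_pos.2 hq
    refine ⟨_, Real.sqrt_pos.2 (by positivity), fun N hN =>
      ⟨fun _ => sqrt_windowGeomSum_mul_le_of_lt hR hρ h hN, fun h' => absurd h' h.ne,
        fun h' => absurd h' (lt_asymm h)⟩⟩
  · refine ⟨1, one_pos, fun N hN => ⟨fun h' => absurd h h'.ne,
      fun _ => (sqrt_windowGeomSum_mul_eq_of_eq hR h hN).trans_le (one_mul _).ge,
      fun h' => absurd h h'.ne'⟩⟩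
  · have hq : (R ^ 2 / ρ) ^ 2 < 1 := pow_lt_one₀ (by positivity) ((div_lt_one hρ).2 h) two_ne_zero
    have := sub_pos.2 hq
    refine ⟨_, Real.sqrt_pos.2 (by positivity), fun N hN =>
      ⟨fun h' => absurd h' (lt_asymm h), fun h' => absurd h' h.ne',
        fun _ => sqrt_windowGeomSum_mul_le_of_gt hR h⟩⟩

end Rates

theorem mfs_bounded_coefficients_with_convergence_general
    (R ρ cs Cs Cv : ℝ) (hR : 1 < R) (hRρ : R < ρ)
    (hcs : 0 < cs) (hCv : 0 < Cv)
    (s v : ℤ → ℂ)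
    (hs0 : s 0 ≠ 0) (hs0' : ‖s 0‖ ≤ Cs)
    (hsl : ∀ m : ℤ, m ≠ 0 → cs / |(m : ℝ)| * R ^ (-|m|) ≤ ‖s m‖)
    (hsu : ∀ m : ℤ, m ≠ 0 → ‖s m‖ ≤ Cs / |(m : ℝ)| * R ^ (-|m|))
    (hv : ∀ m : ℤ, ‖v m‖ ≤ Cv * ρ ^ (-|m|)) :
    ∃ B C : ℝ, 0 < B ∧ 0 < C ∧ ∀ N : ℕ, Even N → 2 ≤ N →
      ∃ a : ℤ → ℂ,
        Real.sqrt N * coefNorm N a ≤ B ∧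
        (ρ < R ^ 2 → tErr N s v a ≤ ENNReal.ofReal (C * ρ ^ (-(N : ℝ) / 2))) ∧
        (ρ = R ^ 2 → tErr N s v a ≤ ENNReal.ofReal (C * Real.sqrt N * R ^ (-(N : ℝ)))) ∧
        (R ^ 2 < ρ → tErr N s v a ≤ ENNReal.ofReal (C * R ^ (-(N : ℝ)))) := by
  have hCs : 0 ≤ Cs := (norm_nonneg _).trans hs0'
  simp only [← Int.cast_abs, Int.abs_eq_natAbs, Int.cast_natCast, zpow_neg, zpow_natCast]
    at hsl hsu hv
  have hc₀ : 0 < min cs ‖s 0‖ := lt_min hcs (norm_pos_iff.2 hs0)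
  obtain ⟨B, D, hB, hD, hBD⟩ := exists_coefNorm_tErr_collocationCoeff_le hR hRρ hc₀ hCs hCv
    (min_div_succ_le_norm hcs (by linarith) hsl) hsu hv
  obtain ⟨C, hC, hrate⟩ := exists_sqrt_windowGeomSum_mul_le (by linarith : 0 < R)
    (by linarith : 0 < ρ)
  refine ⟨B, D * C, hB, mul_pos hD hC, fun N hN hN2 => ?_⟩
  obtain ⟨hcoef, herr⟩ := hBD N hN (by omega)
  have herr' (r : ℝ) (hr : √(windowGeomSum N ((R ^ 2 / ρ) ^ 2)) * (R ^ N)⁻¹ ≤ C * r) :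
      tErr N s v (collocationCoeff N s v) ≤ ENNReal.ofReal (D * C * r) :=
    herr.trans (ENNReal.ofReal_le_ofReal (by rw [mul_assoc D]; gcongr))
  obtain ⟨hlt, heq, hgt⟩ := hrate N hN
  refine ⟨collocationCoeff N s v, hcoef, fun h => herr' _ (hlt h), fun h => ?_,
    fun h => herr' _ (hgt h)⟩
  rw [mul_assoc (D * C)]
  exact herr' _ (heq h)

/-- When `1 < R < ρ`, the MFS attains the convergence rates of the three regimes with
uniformly bounded coefficient norm `√N·|α̂| ≤ B`. -/
theorem mfs_bounded_coefficients_with_convergence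
    (R ρ cs Cs Cv : ℝ) (hR : 1 < R) (hRρ : R < ρ)
    (hcs : 0 < cs) (hcsCs : cs ≤ Cs) (hCv : 0 < Cv)
    (s v : ℤ → ℂ)
    (hs0 : s 0 ≠ 0) (hs0' : ‖s 0‖ ≤ Cs)
    (hsl : ∀ m : ℤ, m ≠ 0 → cs / |(m : ℝ)| * R ^ (-|m|) ≤ ‖s m‖)
    (hsu : ∀ m : ℤ, m ≠ 0 → ‖s m‖ ≤ Cs / |(m : ℝ)| * R ^ (-|m|))
    (hv : ∀ m : ℤ, ‖v m‖ ≤ Cv * ρ ^ (-|m|)) :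
    ∃ B C : ℝ, 0 < B ∧ 0 < C ∧ ∀ N : ℕ, Even N → 2 ≤ N →
      ∃ a : ℤ → ℂ,
        Real.sqrt N * coefNorm N a ≤ B ∧
        (ρ < R ^ 2 → tErr N s v a ≤ ENNReal.ofReal (C * ρ ^ (-(N : ℝ) / 2))) ∧
        (ρ = R ^ 2 → tErr N s v a ≤ ENNReal.ofReal (C * Real.sqrt N * R ^ (-(N : ℝ)))) ∧
        (R ^ 2 < ρ → tErr N s v a ≤ ENNReal.ofReal (C * R ^ (-(N : ℝ)))) :=
  mfs_bounded_coefficients_with_convergence_general R ρ cs Cs Cv hR hRρ hcs hCv s v hs0 hs0' hsl hsu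
    hv
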